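/- For every α, β ∈ {−1, 1}: (i) a three-element subset of the configuration D_{α,β} is collinear in ℙ²(ℝ) if and only if it is one of the eighteen triples {V₁,S₁,S₄}, {V₁,S₂,S₃}, {V₁,S₅,S₇}, {V₁,S₆,S₁₀}, {V₁,S₈,S₉}, {V₁,S₁₁,S₁₂}, {V₂,S₁,S₂}, {V₂,S₃,S₆}, {V₂,S₄,S₁₂}, {V₂,S₅,S₈}, {V₂,S₇,S₉}, {V₂,S₁₀,S₁₁}, {V₃,S₁,S₃}, {V₃,S₂,S₅}, {V₃,S₄,S₉}, {V₃,S₆,S₁₁}, {V₃,S₇,S₈}, {V₃,S₁₀,S₁₂}; and (ii) every bijection f of D_{α,β} preserving collinearity of triples in both directions satisfies f({V₁,V₂,V₃}) = {V₁,V₂,V₃}. -/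

import Mathlib

noncomputable section

/-- The real projective plane `ℙ²(ℝ)`. -/
abbrev ProjPlaneR := Projectivization ℝ (Fin 3 → ℝ)

/-- A vector `![a,b,c]` with a nonzero coordinate is nonzero. -/
theorem vne (a b c : ℝ) (i : Fin 3) (h : ![a, b, c] i ≠ 0) : ![a, b, c] ≠ 0 :=
  fun he => h (by rw [he]; simp)

/-- The point `(a : b : c)` of `ℙ²(ℝ)`. -/
def mkP (a b c : ℝ) (h : ![a, b, c] ≠ 0) : ProjPlaneR :=
  Projectivization.mk ℝ ![a, b, c] h

/-- A set of points of `ℙ²(ℝ)` lies on a common projective line iff some nonzero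
linear form vanishes on (representatives of) all of them. -/
def ProjCollinear (s : Set ProjPlaneR) : Prop :=
  ∃ f : (Fin 3 → ℝ) →ₗ[ℝ] ℝ, f ≠ 0 ∧ ∀ p ∈ s, f p.rep = 0

/-! The points of the configuration `D_{α,β}`. -/

def V₁ : ProjPlaneR := mkP 0 0 1 (vne _ _ _ 2 (by simp))
def V₂ : ProjPlaneR := mkP 1 0 0 (vne _ _ _ 0 (by norm_num))
def V₃ : ProjPlaneR := mkP 0 1 0 (vne _ _ _ 1 (by norm_num))
def S₁ : ProjPlaneR := mkP 1 1 1 (vne _ _ _ 0 (by norm_num))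
def S₂ : ProjPlaneR := mkP 4 1 1 (vne _ _ _ 0 (by norm_num))
def S₃ : ProjPlaneR := mkP 4 1 4 (vne _ _ _ 0 (by norm_num))
def S₄ : ProjPlaneR := mkP 2 2 1 (vne _ _ _ 0 (by norm_num))
def S₅ : ProjPlaneR := mkP 4 (-2) 1 (vne _ _ _ 0 (by norm_num))
def S₆ : ProjPlaneR := mkP (-1) 1 4 (vne _ _ _ 0 (by norm_num))
def S₇ (α : ℝ) : ProjPlaneR := mkP 4 (-2) (α * Real.sqrt 2) (vne _ _ _ 0 (by norm_num))
def S₈ (α : ℝ) : ProjPlaneR := mkP (2 * α * Real.sqrt 2) (-2) 1 (vne _ _ _ 1 (by norm_num))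
def S₉ (α : ℝ) : ProjPlaneR := mkP 2 (-(α * Real.sqrt 2)) 1 (vne _ _ _ 0 (by norm_num))
def S₁₀ (β : ℝ) : ProjPlaneR := mkP (-1) 1 (β * Real.sqrt 2) (vne _ _ _ 0 (by norm_num))
def S₁₁ (β : ℝ) : ProjPlaneR := mkP (-1) (2 * β * Real.sqrt 2) 4 (vne _ _ _ 0 (by norm_num))
def S₁₂ (β : ℝ) : ProjPlaneR := mkP (-(β * Real.sqrt 2)) 4 2 (vne _ _ _ 1 (by norm_num))

/-- The configuration `D_{α,β}` as a set of 15 points of `ℙ²(ℝ)`. -/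
def Dconf (α β : ℝ) : Set ProjPlaneR :=
  {V₁, V₂, V₃, S₁, S₂, S₃, S₄, S₅, S₆, S₇ α, S₈ α, S₉ α, S₁₀ β, S₁₁ β, S₁₂ β}

/-!
All coordinates of `D_{α,β}` lie in `ℤ[√2]`, and `ℤ[√2] → ℝ` is injective, so three points are
collinear iff the determinant of their coordinate vectors vanishes in `ℤ[√2]`, where it can be
evaluated exactly; as the determinant is alternating, the 455 increasing triples suffice.

For (ii): a bijection preserving collinearity permutes the eighteen lines, so it cannot decrease
the number of lines through a point. Each of `V₁, V₂, V₃` lies on six lines and every other point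
on three, so `{V₁, V₂, V₃}` is mapped into, hence onto, itself.
-/

open Matrix

theorem linearMap_mk_rep_eq_zero_iff {K V : Type*} [Field K] [AddCommGroup V] [Module K V]
    (f : V →ₗ[K] K) {v : V} (hv : v ≠ 0) :
    f (Projectivization.mk K v hv).rep = 0 ↔ f v = 0 := by
  obtain ⟨a, ha⟩ := Projectivization.exists_smul_eq_mk_rep K v hv
  rw [← ha, LinearMap.map_smul_of_tower, Units.smul_def, smul_eq_mul, mul_eq_zero,
    or_iff_right a.ne_zero]

theorem exists_mk_eq_of_eq {K V : Type*} [DivisionRing K] [AddCommGroup V] [Module K V]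
    {v w : V} (hv : v ≠ 0) (h : v = w) :
    ∃ hw, Projectivization.mk K v hv = Projectivization.mk K w hw := by
  subst h; exact ⟨hv, rfl⟩

theorem projCollinear_mk_iff_det_eq_zero {u v w : Fin 3 → ℝ} (hu : u ≠ 0) (hv : v ≠ 0)
    (hw : w ≠ 0) :
    ProjCollinear {Projectivization.mk ℝ u hu, Projectivization.mk ℝ v hv,
      Projectivization.mk ℝ w hw} ↔ (of ![u, v, w]).det = 0 := by
  rw [← exists_mulVec_eq_zero_iff]
  have hrows (c : Fin 3 → ℝ) :
      of ![u, v, w] *ᵥ c = 0 ↔ c ⬝ᵥ u = 0 ∧ c ⬝ᵥ v = 0 ∧ c ⬝ᵥ w = 0 := by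
    simp only [funext_iff, Fin.forall_fin_succ, mulVec, dotProduct_comm c]
    simp
  simp only [ProjCollinear, hrows, Set.forall_mem_insert, Set.mem_singleton_iff, forall_eq,
    linearMap_mk_rep_eq_zero_iff]
  set e := dotProductEquiv ℝ (Fin 3)
  have he : ∀ c x, e c x = c ⬝ᵥ x := fun _ _ => rfl
  constructor
  · rintro ⟨f, hf, h⟩
    refine ⟨e.symm f, by simpa using hf, ?_⟩
    simpa only [← he, e.apply_symm_apply] using h
  · rintro ⟨c, hc, h⟩
    exact ⟨e c, by simpa using hc, by simpa only [he] using h⟩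

theorem det_of_eq_triple_product {R : Type*} [CommRing R] (u v w : Fin 3 → R) :
    (of ![u, v, w]).det = u ⬝ᵥ v ⨯₃ w :=
  (triple_product_eq_det u v w).symm

theorem forall_ne_of_forall_lt {ι : Type*} [LinearOrder ι] {P : ι → ι → ι → Prop}
    (swap₁₂ : ∀ {i j k}, P i j k → P j i k) (swap₂₃ : ∀ {i j k}, P i j k → P i k j)
    (h : ∀ i j k, i < j → j < k → P i j k) {i j k : ι} (hij : i ≠ j) (hik : i ≠ k)
    (hjk : j ≠ k) : P i j k := by
  rcases hij.lt_or_gt with hij | hji <;> rcases hik.lt_or_gt with hik | hki <;>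
    rcases hjk.lt_or_gt with hjk | hkj
  · exact h i j k hij hjk
  · exact swap₂₃ (h i k j hik hkj)
  · exact absurd (hij.trans hjk) (not_lt.2 hki.le)
  · exact swap₂₃ (swap₁₂ (h k i j hki hij))
  · exact swap₁₂ (h j i k hji hik)
  · exact absurd (hik.trans hkj) (not_lt.2 hji.le)
  · exact swap₁₂ (swap₂₃ (h j k i hjk hki))
  · exact swap₁₂ (swap₂₃ (swap₁₂ (h k j i hkj hji)))

section Incidence

variable {ι : Type*} [DecidableEq ι] (L : Finset (Finset ι))

def pointDegree (i : ι) : ℕ := (L.filter (i ∈ ·)).card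

variable {L}

theorem pointDegree_le_pointDegree_of_image_mem {σ : ι → ι} (hσ : σ.Injective)
    (hL : ∀ s ∈ L, s.image σ ∈ L) (i : ι) : pointDegree L i ≤ pointDegree L (σ i) :=
  Finset.card_le_card_of_injOn (Finset.image σ)
    (fun s hs => by
      simp only [Finset.mem_coe, Finset.mem_filter] at hs ⊢
      exact ⟨hL s hs.1, Finset.mem_image_of_mem σ hs.2⟩)
    (fun s _ t _ hst => Finset.image_injective hσ hst)

theorem image_filter_le_pointDegree [Fintype ι] {σ : ι → ι} (hσ : σ.Injective)
    (hL : ∀ s ∈ L, s.image σ ∈ L) (n : ℕ) :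
    (Finset.univ.filter (n ≤ pointDegree L ·)).image σ =
      Finset.univ.filter (n ≤ pointDegree L ·) :=
  Finset.eq_of_subset_of_card_le
    (Finset.image_subset_iff.2 fun i hi => by
      simp only [Finset.mem_filter, Finset.mem_univ, true_and] at hi ⊢
      exact hi.trans (pointDegree_le_pointDegree_of_image_mem hσ hL i))
    (Finset.card_image_of_injective _ hσ).ge

end Incidence

theorem Function.Injective.triple_eq_triple_iff {ι X : Type*} [DecidableEq ι] {g : ι → X}
    (hg : g.Injective) (i j k x y z : ι) :
    ({g i, g j, g k} : Set X) = {g x, g y, g z} ↔ ({i, j, k} : Finset ι) = {x, y, z} := by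
  rw [← Finset.coe_inj, ← (Set.image_injective.2 hg).eq_iff]
  simp only [Finset.coe_insert, Finset.coe_singleton, Set.image_insert_eq, Set.image_singleton]

theorem exists_intCast_eq_of_eq_one_or_eq_neg_one {α : ℝ} (h : α = 1 ∨ α = -1) :
    ∃ a : ℤ, (a = 1 ∨ a = -1) ∧ (a : ℝ) = α := by
  rcases h with rfl | rfl
  exacts [⟨1, by norm_num⟩, ⟨-1, by norm_num⟩]

namespace Dconf

open Zsqrtd

def toRealHom : ℤ√2 →+* ℝ := toReal (by norm_num)

theorem toRealHom_injective : Function.Injective toRealHom :=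
  toReal_injective _ fun n h => (by norm_num : ¬ IsSquare (2 : ℤ)) ⟨n, h⟩

def coordsZ (a b : ℤ√2) : Fin 15 → Fin 3 → ℤ√2 :=
  ![![0, 0, 1], ![1, 0, 0], ![0, 1, 0], ![1, 1, 1], ![4, 1, 1], ![4, 1, 4], ![2, 2, 1],
    ![4, -2, 1], ![-1, 1, 4],
    ![4, -2, a * sqrtd], ![2 * a * sqrtd, -2, 1], ![2, -(a * sqrtd), 1],
    ![-1, 1, b * sqrtd], ![-1, 2 * b * sqrtd, 4], ![-(b * sqrtd), 4, 2]]

def pt (α β : ℝ) : Fin 15 → ProjPlaneR :=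
  ![V₁, V₂, V₃, S₁, S₂, S₃, S₄, S₅, S₆, S₇ α, S₈ α, S₉ α, S₁₀ β, S₁₁ β, S₁₂ β]

def lines : Finset (Finset (Fin 15)) :=
  {{0, 3, 6}, {0, 4, 5}, {0, 7, 9}, {0, 8, 12}, {0, 10, 11}, {0, 13, 14},
   {1, 3, 4}, {1, 5, 8}, {1, 6, 14}, {1, 7, 10}, {1, 9, 11}, {1, 12, 13},
   {2, 3, 5}, {2, 4, 7}, {2, 6, 11}, {2, 8, 13}, {2, 9, 10}, {2, 12, 14}}

theorem range_pt (α β : ℝ) : Set.range (pt α β) = Dconf α β := by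
  simp only [pt, range_cons, range_empty, Set.union_empty, Set.singleton_union]
  rfl

theorem exists_pt_eq_mk (a b : ℤ) (i : Fin 15) :
    ∃ h, pt a b i = Projectivization.mk ℝ (fun j => toRealHom (coordsZ a b i j)) h := by
  fin_cases i <;> refine exists_mk_eq_of_eq _ (funext fun j => ?_) <;> fin_cases j <;>
    simp [coordsZ, toRealHom]

theorem projCollinear_pt_iff_det (a b : ℤ) (i j k : Fin 15) :
    ProjCollinear {pt a b i, pt a b j, pt a b k} ↔
      (of ![coordsZ a b i, coordsZ a b j, coordsZ a b k]).det = 0 := by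
  obtain ⟨hi, ei⟩ := exists_pt_eq_mk a b i
  obtain ⟨hj, ej⟩ := exists_pt_eq_mk a b j
  obtain ⟨hk, ek⟩ := exists_pt_eq_mk a b k
  rw [ei, ej, ek, projCollinear_mk_iff_det_eq_zero, ← map_eq_zero_iff _ toRealHom_injective,
    RingHom.map_det]
  congr! 2
  ext r c
  fin_cases r <;> rfl

theorem triple_product_coordsZ_eq_zero_iff_of_lt :
    ∀ a ∈ ({1, -1} : Finset ℤ), ∀ b ∈ ({1, -1} : Finset ℤ), ∀ i j k : Fin 15, i < j → j < k →
      (coordsZ a b i ⬝ᵥ coordsZ a b j ⨯₃ coordsZ a b k = 0 ↔ {i, j, k} ∈ lines) := by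
  decide +kernel

theorem det_coordsZ_eq_zero_iff {a b : ℤ} (ha : a = 1 ∨ a = -1)
    (hb : b = 1 ∨ b = -1) {i j k : Fin 15} (hij : i ≠ j) (hik : i ≠ k) (hjk : j ≠ k) :
    (of ![coordsZ a b i, coordsZ a b j, coordsZ a b k]).det = 0 ↔ {i, j, k} ∈ lines := by
  rw [det_of_eq_triple_product]
  refine forall_ne_of_forall_lt (P := fun i j k =>
      coordsZ a b i ⬝ᵥ coordsZ a b j ⨯₃ coordsZ a b k = 0 ↔ {i, j, k} ∈ lines)
    (fun h => ?_) (fun h => ?_) (fun i j k hij hjk => ?_) hij hik hjk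
  · rwa [triple_product_permutation, ← cross_anticomm, dotProduct_neg, neg_eq_zero,
      Finset.insert_comm]
  · rwa [← cross_anticomm, dotProduct_neg, neg_eq_zero, Finset.pair_comm]
  · exact triple_product_coordsZ_eq_zero_iff_of_lt a (by simpa using ha) b (by simpa using hb)
      i j k hij hjk

theorem projCollinear_pt_iff {a b : ℤ} (ha : a = 1 ∨ a = -1) (hb : b = 1 ∨ b = -1)
    {i j k : Fin 15} (hij : i ≠ j) (hik : i ≠ k) (hjk : j ≠ k) :
    ProjCollinear {pt a b i, pt a b j, pt a b k} ↔ {i, j, k} ∈ lines :=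
  (projCollinear_pt_iff_det a b i j k).trans (det_coordsZ_eq_zero_iff ha hb hij hik hjk)

theorem exists_insert_notMem_lines :
    ∀ i j : Fin 15, i ≠ j → ∃ k, i ≠ k ∧ j ≠ k ∧ {i, j, k} ∉ lines := by
  decide +kernel

theorem card_of_mem_lines {s : Finset (Fin 15)} (hs : s ∈ lines) : s.card = 3 := by
  fin_cases hs <;> rfl

theorem filter_six_le_pointDegree :
    Finset.univ.filter (6 ≤ pointDegree lines ·) = {0, 1, 2} := by
  decide +kernel

theorem pt_injective {a b : ℤ} (ha : a = 1 ∨ a = -1) (hb : b = 1 ∨ b = -1) :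
    (pt a b).Injective := by
  intro i j hij
  by_contra hne
  -- if `pt a b i = pt a b j`, every third point would be collinear with the two
  obtain ⟨k, hik, hjk, hk⟩ := exists_insert_notMem_lines i j hne
  refine hk ((projCollinear_pt_iff ha hb hne hik hjk).1 ?_)
  rw [hij, projCollinear_pt_iff_det]
  exact det_zero_of_row_eq (i := 0) (j := 1) (by decide) rfl

theorem image_mem_lines {a b : ℤ} (ha : a = 1 ∨ a = -1) (hb : b = 1 ∨ b = -1)
    {σ : Fin 15 → Fin 15} (hσ : σ.Injective)
    (hcol : ∀ i j k, ProjCollinear {pt a b i, pt a b j, pt a b k} →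
      ProjCollinear {pt a b (σ i), pt a b (σ j), pt a b (σ k)}) :
    ∀ s ∈ lines, s.image σ ∈ lines := by
  intro s hs
  obtain ⟨i, j, k, hij, hik, hjk, rfl⟩ := Finset.card_eq_three.1 (card_of_mem_lines hs)
  rw [Finset.image_insert, Finset.image_insert, Finset.image_singleton,
    ← projCollinear_pt_iff ha hb (hσ.ne hij) (hσ.ne hik) (hσ.ne hjk)]
  exact hcol i j k ((projCollinear_pt_iff ha hb hij hik hjk).2 hs)

theorem image_vertices_eq {a b : ℤ} (ha : a = 1 ∨ a = -1) (hb : b = 1 ∨ b = -1)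
    {f : ProjPlaneR → ProjPlaneR} (hf : Set.BijOn f (Dconf a b) (Dconf a b))
    (hcol : ∀ p ∈ Dconf a b, ∀ q ∈ Dconf a b, ∀ r ∈ Dconf a b,
      ProjCollinear {p, q, r} → ProjCollinear {f p, f q, f r}) :
    f '' {V₁, V₂, V₃} = {V₁, V₂, V₃} := by
  rw [← range_pt] at hf hcol
  choose σ hσ using fun i => hf.mapsTo (Set.mem_range_self (f := pt a b) i)
  have hσinj : σ.Injective := fun i j h => pt_injective ha hb <|
    hf.injOn (Set.mem_range_self i) (Set.mem_range_self j) (by rw [← hσ, ← hσ, h])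
  have hlines : ∀ s ∈ lines, s.image σ ∈ lines := image_mem_lines ha hb hσinj fun i j k h => by
    simpa only [hσ] using hcol _ (Set.mem_range_self i) _ (Set.mem_range_self j) _
      (Set.mem_range_self k) h
  have hV : ({V₁, V₂, V₃} : Set ProjPlaneR) = pt a b '' ↑({0, 1, 2} : Finset (Fin 15)) := by
    simp only [Finset.coe_insert, Finset.coe_singleton, Set.image_insert_eq, Set.image_singleton]
    rfl
  rw [hV, Set.image_image, ← filter_six_le_pointDegree]
  simp only [← hσ]
  rw [← Set.image_image (g := pt a b), ← Finset.coe_image,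
    image_filter_le_pointDegree hσinj hlines]

end Dconf

/--
For `α, β ∈ {−1,1}`:
(i) a three-element subset of `D_{α,β}` is collinear in `ℙ²(ℝ)` iff it is one of the
eighteen listed triples; and
(ii) every collinearity-preserving bijection `f` of `D_{α,β}` satisfies
`f({V₁,V₂,V₃}) = {V₁,V₂,V₃}`.
-/
theorem stmt_16 (α β : ℝ) (hα : α = 1 ∨ α = -1) (hβ : β = 1 ∨ β = -1) :
    (∀ p q r : ProjPlaneR, p ∈ Dconf α β → q ∈ Dconf α β → r ∈ Dconf α β →
      p ≠ q → p ≠ r → q ≠ r →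
      (ProjCollinear {p, q, r} ↔
        (({p, q, r} : Set ProjPlaneR) = {V₁, S₁, S₄} ∨
         ({p, q, r} : Set ProjPlaneR) = {V₁, S₂, S₃} ∨
         ({p, q, r} : Set ProjPlaneR) = {V₁, S₅, S₇ α} ∨
         ({p, q, r} : Set ProjPlaneR) = {V₁, S₆, S₁₀ β} ∨
         ({p, q, r} : Set ProjPlaneR) = {V₁, S₈ α, S₉ α} ∨
         ({p, q, r} : Set ProjPlaneR) = {V₁, S₁₁ β, S₁₂ β} ∨
         ({p, q, r} : Set ProjPlaneR) = {V₂, S₁, S₂} ∨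
         ({p, q, r} : Set ProjPlaneR) = {V₂, S₃, S₆} ∨
         ({p, q, r} : Set ProjPlaneR) = {V₂, S₄, S₁₂ β} ∨
         ({p, q, r} : Set ProjPlaneR) = {V₂, S₅, S₈ α} ∨
         ({p, q, r} : Set ProjPlaneR) = {V₂, S₇ α, S₉ α} ∨
         ({p, q, r} : Set ProjPlaneR) = {V₂, S₁₀ β, S₁₁ β} ∨
         ({p, q, r} : Set ProjPlaneR) = {V₃, S₁, S₃} ∨
         ({p, q, r} : Set ProjPlaneR) = {V₃, S₂, S₅} ∨
         ({p, q, r} : Set ProjPlaneR) = {V₃, S₄, S₉ α} ∨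
         ({p, q, r} : Set ProjPlaneR) = {V₃, S₆, S₁₁ β} ∨
         ({p, q, r} : Set ProjPlaneR) = {V₃, S₇ α, S₈ α} ∨
         ({p, q, r} : Set ProjPlaneR) = {V₃, S₁₀ β, S₁₂ β}))) ∧
    (∀ f : ProjPlaneR → ProjPlaneR,
      Set.BijOn f (Dconf α β) (Dconf α β) →
      (∀ p ∈ Dconf α β, ∀ q ∈ Dconf α β, ∀ r ∈ Dconf α β,
        (ProjCollinear {p, q, r} ↔ ProjCollinear {f p, f q, f r})) →
      f '' ({V₁, V₂, V₃} : Set ProjPlaneR) = {V₁, V₂, V₃}) := by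
  obtain ⟨a, ha, rfl⟩ := exists_intCast_eq_of_eq_one_or_eq_neg_one hα
  obtain ⟨b, hb, rfl⟩ := exists_intCast_eq_of_eq_one_or_eq_neg_one hβ
  refine ⟨fun p q r hp hq hr hpq hpr hqr => ?_,
    fun f hf hcol => Dconf.image_vertices_eq ha hb hf fun p hp q hq r hr => (hcol p hp q hq r hr).1⟩
  rw [← Dconf.range_pt] at hp hq hr
  obtain ⟨i, rfl⟩ := hp
  obtain ⟨j, rfl⟩ := hq
  obtain ⟨k, rfl⟩ := hr
  rw [Dconf.projCollinear_pt_iff ha hb (ne_of_apply_ne _ hpq) (ne_of_apply_ne _ hpr)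
    (ne_of_apply_ne _ hqr)]
  simp only [Dconf.lines, Finset.mem_insert, Finset.mem_singleton,
    ← (Dconf.pt_injective ha hb).triple_eq_triple_iff]
  rfl

end
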